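/- arXiv:1002.5041 — 5 statements merged into one kernel-verified Lean document; each statement's English description precedes it below -/
import Mathlib

section
/- Let f, g : (0,∞) → ℝ be continuous functions with g(K) > 0 for all K, lim_{K→0⁺} f(K) = lim_{K→∞} f(K) = 0 and lim_{K→0⁺} g(K) = lim_{K→∞} g(K) = 0, and define F(K₁,K₂) = (g(K₂)f(K₁) − g(K₁)f(K₂))/(g(K₁)+g(K₂)). If F(K₁,K₂) > 0 for some pair (K₁,K₂), then F attains its global maximum on (0,∞)², and every global maximizer (K₁*,K₂*) satisfies K₁* ≠ K₂*. -/
open Set Filter Topology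

/-!
Let `c = F(a, b) > 0`. Since `|f| < c/2` off a compact set, and `|f|/g` is bounded on it, we get
`|f| ≤ c/2 + A g` everywhere. As `F(K₁, K₂)` is bounded by the mean of `|f(K₁)|` and `|f(K₂)|`
with weights `g(K₂), g(K₁)`, this gives `|F(K₁, K₂)| < c`, uniformly in `K₂`, as soon as `|f(K₁)| < c/2`
and `A g(K₁) < c/2`, i.e. for `K₁` outside a compact set; by antisymmetry the same holds in `K₂`.
So `F < c` outside a compact set of strike pairs and the continuous `F` attains its maximum, which is
at least `c` and hence off the diagonal, where `F` vanishes.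
-/

noncomputable def twoStrike {X : Type*} (f g : X → ℝ) (x y : X) : ℝ :=
  (g y * f x - g x * f y) / (g x + g y)

section

variable {X : Type*}

@[simp]
theorem twoStrike_self (f g : X → ℝ) (x : X) : twoStrike f g x x = 0 := by
  simp [twoStrike]

theorem twoStrike_swap (f g : X → ℝ) (x y : X) : twoStrike f g y x = -twoStrike f g x y := by
  rw [twoStrike, twoStrike, add_comm (g y), ← neg_div, neg_sub]

theorem abs_twoStrike_le {f g : X → ℝ} {x y : X} (hx : 0 < g x) (hy : 0 < g y) :
    |twoStrike f g x y| ≤ (g y * |f x| + g x * |f y|) / (g x + g y) := by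
  rw [twoStrike, abs_div, abs_of_pos (add_pos hx hy)]
  gcongr
  calc |g y * f x - g x * f y| ≤ |g y * f x| + |g x * f y| := abs_sub _ _
    _ = g y * |f x| + g x * |f y| := by rw [abs_mul, abs_mul, abs_of_pos hx, abs_of_pos hy]

variable [TopologicalSpace X] {f g : X → ℝ}

theorem exists_abs_le_add_mul (hf : Continuous f) (hg : Continuous g) (hg_pos : ∀ x, 0 < g x)
    (hf_lim : Tendsto f (cocompact X) (𝓝 0)) {η : ℝ} (hη : 0 < η) :
    ∃ A, ∀ x, |f x| ≤ η + A * g x := by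
  obtain ⟨K, hK, hK_compl⟩ := mem_cocompact.mp <| hf_lim.abs.eventually_lt_const (by simpa using hη)
  have hquot : Continuous fun x => |f x| / g x :=
    by fun_prop (disch := exact fun x => (hg_pos x).ne')
  obtain ⟨C, hC⟩ := hK.exists_bound_of_continuousOn hquot.continuousOn
  refine ⟨max C 0, fun x => ?_⟩
  have hAg : 0 ≤ max C 0 * g x := mul_nonneg (le_max_right _ _) (hg_pos x).le
  by_cases hx : x ∈ K
  · have hCx : |f x| / g x ≤ max C 0 := ((le_abs_self _).trans (hC x hx)).trans (le_max_left _ _)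
    rw [div_le_iff₀ (hg_pos x)] at hCx
    linarith
  · exact ((hK_compl hx).le).trans (le_add_of_nonneg_right hAg)

variable (hf : Continuous f) (hg : Continuous g) (hg_pos : ∀ x, 0 < g x)
  (hf_lim : Tendsto f (cocompact X) (𝓝 0)) (hg_lim : Tendsto g (cocompact X) (𝓝 0))
include hf hg hg_pos hf_lim hg_lim

theorem eventually_forall_abs_twoStrike_lt {c : ℝ} (hc : 0 < c) :
    ∀ᶠ x in cocompact X, ∀ y, |twoStrike f g x y| < c := by
  obtain ⟨A, hfA⟩ := exists_abs_le_add_mul hf hg hg_pos hf_lim (half_pos hc)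
  have hfx := hf_lim.abs.eventually_lt_const (u := c / 2) (by simpa using hc)
  have hgx := (hg_lim.const_mul A).eventually_lt_const (u := c / 2) (by simpa using hc)
  filter_upwards [hfx, hgx] with x hfx hgx y
  have hgx_pos := hg_pos x
  have hgy_pos := hg_pos y
  refine (abs_twoStrike_le hgx_pos hgy_pos).trans_lt ((div_lt_iff₀ (by positivity)).mpr ?_)
  nlinarith [mul_le_mul_of_nonneg_left (hfA y) hgx_pos.le, mul_lt_mul_of_pos_left hfx hgy_pos,
    mul_lt_mul_of_pos_right hgx hgy_pos]

theorem eventually_twoStrike_lt {c : ℝ} (hc : 0 < c) :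
    ∀ᶠ p in cocompact (X × X), twoStrike f g p.1 p.2 < c := by
  have h := eventually_forall_abs_twoStrike_lt hf hg hg_pos hf_lim hg_lim hc
  rw [← coprod_cocompact]
  refine ⟨(h.comap Prod.fst).mono fun p hp => (le_abs_self _).trans_lt (hp p.2),
    (h.comap Prod.snd).mono fun p hp => ?_⟩
  rw [← neg_neg (twoStrike f g _ _), ← twoStrike_swap]
  exact (neg_le_abs _).trans_lt (hp p.1)

theorem exists_forall_twoStrike_le {a b : X} (hab : 0 < twoStrike f g a b) :
    ∃ p : X × X, ∀ q : X × X, twoStrike f g q.1 q.2 ≤ twoStrike f g p.1 p.2 := by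
  have hcont : Continuous fun p : X × X => twoStrike f g p.1 p.2 := by
    unfold twoStrike
    fun_prop (disch := exact fun p => (add_pos (hg_pos p.1) (hg_pos p.2)).ne')
  exact hcont.exists_forall_ge' (a, b)
    ((eventually_twoStrike_lt hf hg hg_pos hf_lim hg_lim hab).mono fun _ => le_of_lt)

end

theorem tendsto_comp_exp_cocompact {f : ℝ → ℝ} (h0 : Tendsto f (𝓝[>] 0) (𝓝 0))
    (hinf : Tendsto f atTop (𝓝 0)) : Tendsto (f ∘ Real.exp) (cocompact ℝ) (𝓝 0) := by
  rw [cocompact_eq_atBot_atTop]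
  exact (h0.comp Real.tendsto_exp_atBot_nhdsGT).sup (hinf.comp Real.tendsto_exp_atTop)

/-- If the two-strike objective function `F` is somewhere positive,
it attains its global maximum on `(0,∞)²`, and every global maximizer has
distinct strikes. -/
theorem two_strike_objective_attains_max
    (f g : ℝ → ℝ)
    (hf_cont : ContinuousOn f (Ioi 0)) (hg_cont : ContinuousOn g (Ioi 0))
    (hg_pos : ∀ K ∈ Ioi (0:ℝ), 0 < g K)
    (hf0 : Tendsto f (𝓝[>] 0) (𝓝 0)) (hfinf : Tendsto f atTop (𝓝 0))
    (hg0 : Tendsto g (𝓝[>] 0) (𝓝 0)) (hginf : Tendsto g atTop (𝓝 0))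
    (F : ℝ → ℝ → ℝ)
    (hF : ∀ K₁ K₂, F K₁ K₂ = (g K₂ * f K₁ - g K₁ * f K₂) / (g K₁ + g K₂))
    (hpos : ∃ K₁ ∈ Ioi (0:ℝ), ∃ K₂ ∈ Ioi (0:ℝ), 0 < F K₁ K₂) :
    (∃ K₁ ∈ Ioi (0:ℝ), ∃ K₂ ∈ Ioi (0:ℝ),
        ∀ L₁ ∈ Ioi (0:ℝ), ∀ L₂ ∈ Ioi (0:ℝ), F L₁ L₂ ≤ F K₁ K₂) ∧
    (∀ K₁ ∈ Ioi (0:ℝ), ∀ K₂ ∈ Ioi (0:ℝ),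
        (∀ L₁ ∈ Ioi (0:ℝ), ∀ L₂ ∈ Ioi (0:ℝ), F L₁ L₂ ≤ F K₁ K₂) → K₁ ≠ K₂) := by
  obtain rfl : F = twoStrike f g := funext₂ hF
  obtain ⟨a, ha, b, hb, hab⟩ := hpos
  -- Substituting `K = exp t` turns `(0, ∞)` into `ℝ`, whose cocompact filter is `atBot ⊔ atTop`.
  have hexp_mem : ∀ t, Real.exp t ∈ Ioi (0:ℝ) := Real.exp_pos
  obtain ⟨⟨s, t⟩, hmax⟩ := exists_forall_twoStrike_le (f := f ∘ Real.exp) (g := g ∘ Real.exp)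
    (hf_cont.comp_continuous Real.continuous_exp hexp_mem)
    (hg_cont.comp_continuous Real.continuous_exp hexp_mem) (fun t => hg_pos _ (hexp_mem t))
    (tendsto_comp_exp_cocompact hf0 hfinf) (tendsto_comp_exp_cocompact hg0 hginf)
    (a := Real.log a) (b := Real.log b)
    (by simpa [twoStrike, Real.exp_log ha, Real.exp_log hb] using hab)
  refine ⟨⟨Real.exp s, hexp_mem s, Real.exp t, hexp_mem t, fun L₁ hL₁ L₂ hL₂ => ?_⟩, ?_⟩
  · rw [← Real.exp_log hL₁, ← Real.exp_log hL₂]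
    exact hmax (Real.log L₁, Real.log L₂)
  · rintro K₁ - K₂ - hK rfl
    have := hK a ha b hb
    rw [twoStrike_self] at this
    linarith
end

section
/- Let (X,𝒜) be a measurable space, f, g : X → ℝ bounded measurable functions with g(x) ≥ δ for all x, for some δ > 0, and let ν⁺, ν⁻ be probability measures on X. Then (∫ g dν⁻ · ∫ f dν⁺ − ∫ g dν⁺ · ∫ f dν⁻)/(∫ g dν⁺ + ∫ g dν⁻) ≤ sup_{x₁,x₂ ∈ X} (g(x₂)f(x₁) − g(x₁)f(x₂))/(g(x₁)+g(x₂)). -/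
open MeasureTheory Set

/-! Write `S` for the supremum. For all `x₁ x₂` the two-point inequality
`g x₂ * f x₁ - g x₁ * f x₂ ≤ S * (g x₁ + g x₂)` holds, and it is affine in `(f x₁, g x₁)` and in
`(f x₂, g x₂)` separately. Integrating it in `x₁` against `ν⁺` and then in `x₂` against `ν⁻`
gives `∫g dν⁻ ∫f dν⁺ - ∫g dν⁺ ∫f dν⁻ ≤ S (∫g dν⁺ + ∫g dν⁻)`, and the denominator is positive. -/

section TwoPoint

variable {X : Type*} {f g : X → ℝ}

lemma bddAbove_range_two_point_ratio {C : ℝ} (hf : ∀ x, |f x| ≤ C) (hg : ∀ x, 0 < g x) :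
    BddAbove (range fun p : X × X => (g p.2 * f p.1 - g p.1 * f p.2) / (g p.1 + g p.2)) := by
  refine ⟨C, ?_⟩
  rintro _ ⟨⟨x₁, x₂⟩, rfl⟩
  have h₁ := abs_le.mp (hf x₁)
  have h₂ := abs_le.mp (hf x₂)
  have hg₁ := hg x₁
  have hg₂ := hg x₂
  rw [div_le_iff₀ (by linarith)]
  nlinarith

lemma two_point_le_iSup_mul {C : ℝ} (hf : ∀ x, |f x| ≤ C) (hg : ∀ x, 0 < g x) (x₁ x₂ : X) :
    g x₂ * f x₁ - g x₁ * f x₂ ≤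
      (⨆ p : X × X, (g p.2 * f p.1 - g p.1 * f p.2) / (g p.1 + g p.2)) * (g x₁ + g x₂) :=
  (div_le_iff₀ (add_pos (hg x₁) (hg x₂))).mp
    (le_ciSup (bddAbove_range_two_point_ratio hf hg) (x₁, x₂))

end TwoPoint

section Integral

variable {X : Type*} [MeasurableSpace X] {μ ν : Measure X} {f g : X → ℝ}

lemma integrable_of_abs_le [IsFiniteMeasure μ] (hf : Measurable f) {C : ℝ} (hC : ∀ x, |f x| ≤ C) :
    Integrable f μ :=
  .of_bound hf.aestronglyMeasurable C (.of_forall hC)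

lemma const_mul_integral_add_const_mul_integral_le [IsProbabilityMeasure μ]
    (hf : Integrable f μ) (hg : Integrable g μ) {a b c : ℝ} (h : ∀ x, a * f x + b * g x ≤ c) :
    a * ∫ x, f x ∂μ + b * ∫ x, g x ∂μ ≤ c := by
  have hmono : ∫ x, (a * f x + b * g x) ∂μ ≤ ∫ _, c ∂μ :=
    integral_mono ((hf.const_mul a).add (hg.const_mul b)) (integrable_const c) h
  rwa [integral_add (hf.const_mul a) (hg.const_mul b), integral_const_mul, integral_const_mul,
    integral_const, probReal_univ, one_smul] at hmono

lemma integral_antisymm_le_of_two_point_le [IsProbabilityMeasure μ] [IsProbabilityMeasure ν]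
    (hfμ : Integrable f μ) (hgμ : Integrable g μ) (hfν : Integrable f ν) (hgν : Integrable g ν)
    {S : ℝ} (hS : ∀ x₁ x₂, g x₂ * f x₁ - g x₁ * f x₂ ≤ S * (g x₁ + g x₂)) :
    (∫ x, g x ∂ν) * (∫ x, f x ∂μ) - (∫ x, g x ∂μ) * (∫ x, f x ∂ν) ≤
      S * ((∫ x, g x ∂μ) + (∫ x, g x ∂ν)) := by
  have integrate_fst (x₂ : X) :
      g x₂ * ∫ x, f x ∂μ + (-f x₂ - S) * ∫ x, g x ∂μ ≤ S * g x₂ :=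
    const_mul_integral_add_const_mul_integral_le hfμ hgμ fun x₁ => by linarith [hS x₁ x₂]
  have integrate_snd :
      ((∫ x, f x ∂μ) - S) * ∫ x, g x ∂ν + (-∫ x, g x ∂μ) * ∫ x, f x ∂ν ≤ S * ∫ x, g x ∂μ :=
    const_mul_integral_add_const_mul_integral_le hgν hfν fun x₂ => by linarith [integrate_fst x₂]
  linarith

lemma le_integral_of_forall_le [IsProbabilityMeasure μ] (hf : Integrable f μ) {c : ℝ}
    (h : ∀ x, c ≤ f x) : c ≤ ∫ x, f x ∂μ := by
  simpa using integral_mono (integrable_const c) hf h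

end Integral

/-- The normalized antisymmetric bilinear expression in two
probability measures is bounded by the supremum of the corresponding
two-point expression. -/
theorem bilinear_expression_le_two_point_sup
    {X : Type*} [MeasurableSpace X]
    (f g : X → ℝ) (hf_meas : Measurable f) (hg_meas : Measurable g)
    (hf_bdd : ∃ C : ℝ, ∀ x, |f x| ≤ C) (hg_bdd : ∃ C : ℝ, ∀ x, |g x| ≤ C)
    (δ : ℝ) (hδ : 0 < δ) (hgδ : ∀ x, δ ≤ g x)
    (νp νn : Measure X) [IsProbabilityMeasure νp] [IsProbabilityMeasure νn] :
    ((∫ x, g x ∂νn) * (∫ x, f x ∂νp) - (∫ x, g x ∂νp) * (∫ x, f x ∂νn)) /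
      ((∫ x, g x ∂νp) + (∫ x, g x ∂νn)) ≤
    ⨆ p : X × X, (g p.2 * f p.1 - g p.1 * f p.2) / (g p.1 + g p.2) := by
  obtain ⟨Cf, hCf⟩ := hf_bdd
  obtain ⟨Cg, hCg⟩ := hg_bdd
  have hg_pos (x : X) : 0 < g x := hδ.trans_le (hgδ x)
  have hgνp : Integrable g νp := integrable_of_abs_le hg_meas hCg
  have hgνn : Integrable g νn := integrable_of_abs_le hg_meas hCg
  have key := integral_antisymm_le_of_two_point_le (integrable_of_abs_le hf_meas hCf) hgνp
    (integrable_of_abs_le hf_meas hCf) hgνn (two_point_le_iSup_mul hCf hg_pos)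
  have hden : 0 < (∫ x, g x ∂νp) + ∫ x, g x ∂νn := by
    linarith [le_integral_of_forall_le hgνp hgδ, le_integral_of_forall_le hgνn hgδ]
  exact (div_le_iff₀ hden).mpr key
end

section
/- Let (X,𝒜) be a measurable space, f, g : X → ℝ bounded measurable functions with g(x) ≥ δ for all x, for some δ > 0. Then for every finite signed measure ω on X with total variation norm ‖ω‖_TV = 1 and ∫ g dω = 0, one has ∫ f dω ≤ sup_{x₁,x₂ ∈ X} (g(x₂)f(x₁) − g(x₁)f(x₂))/(g(x₁)+g(x₂)). -/
/-!
Write `ω = μ - ν` (Jordan decomposition) and let `S` be the supremum. For every pair of points,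
`g y f x - g x f y ≤ S (g x + g y)`; integrating in `x` against `μ` and in `y` against `ν` and using
`∫ g dμ = ∫ g dν =: G` gives `G (∫ f dμ - ∫ f dν) ≤ S G (μ X + ν X) = S G`. Since `g ≥ δ > 0`
and `μ X + ν X = 1`, `G > 0`, and dividing by `G` gives the bound.
-/

open MeasureTheory Set

/-- Integral of a function with respect to a finite signed measure, defined via
the Jordan decomposition. -/
noncomputable def signedIntegral {X : Type*} [MeasurableSpace X]
    (f : X → ℝ) (ω : SignedMeasure X) : ℝ :=
  (∫ x, f x ∂ω.toJordanDecomposition.posPart)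
    - (∫ x, f x ∂ω.toJordanDecomposition.negPart)

section TwoPoint

variable {X : Type*}

theorem abs_two_point_spread_le {f g : X → ℝ} {C : ℝ} (hf : ∀ x, |f x| ≤ C)
    (hg : ∀ x, 0 < g x) (x y : X) :
    |(g y * f x - g x * f y) / (g x + g y)| ≤ C := by
  have hden : 0 < g x + g y := add_pos (hg x) (hg y)
  rw [abs_div, abs_of_pos hden, div_le_iff₀ hden]
  calc |g y * f x - g x * f y| ≤ g y * |f x| + g x * |f y| := by
        simpa [abs_mul, abs_of_pos (hg x), abs_of_pos (hg y)] using abs_sub (g y * f x) (g x * f y)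
    _ ≤ g y * C + g x * C :=
        add_le_add (mul_le_mul_of_nonneg_left (hf x) (hg y).le)
          (mul_le_mul_of_nonneg_left (hf y) (hg x).le)
    _ = C * (g x + g y) := by ring

theorem two_point_spread_le_iSup {f g : X → ℝ} {C : ℝ} (hf : ∀ x, |f x| ≤ C)
    (hg : ∀ x, 0 < g x) (x y : X) :
    g y * f x - g x * f y
      ≤ (⨆ p : X × X, (g p.2 * f p.1 - g p.1 * f p.2) / (g p.1 + g p.2)) * (g x + g y) := by
  have hbdd : BddAbove (range fun p : X × X => (g p.2 * f p.1 - g p.1 * f p.2) / (g p.1 + g p.2)) :=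
    ⟨C, forall_mem_range.2 fun p => (le_abs_self _).trans (abs_two_point_spread_le hf hg p.1 p.2)⟩
  exact (div_le_iff₀ (add_pos (hg x) (hg y))).1 (le_ciSup hbdd (x, y))

variable [MeasurableSpace X]

theorem SignedMeasure.measureReal_totalVariation (ω : SignedMeasure X) (s : Set X) :
    ω.totalVariation.real s
      = ω.toJordanDecomposition.posPart.real s + ω.toJordanDecomposition.negPart.real s :=
  measureReal_add_apply

theorem mul_integral_add_mul_integral_le {μ : Measure X} [IsFiniteMeasure μ] {u v : X → ℝ}
    (hu : Integrable u μ) (hv : Integrable v μ) {α β c : ℝ} (h : ∀ x, α * u x + β * v x ≤ c) :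
    α * ∫ x, u x ∂μ + β * ∫ x, v x ∂μ ≤ c * μ.real univ := by
  have := integral_mono ((hu.const_mul α).add (hv.const_mul β)) (integrable_const c) h
  rw [Pi.add_def, integral_add (hu.const_mul α) (hv.const_mul β), integral_const_mul,
    integral_const_mul, integral_const, smul_eq_mul] at this
  linarith

theorem integral_mul_integral_sub_le_of_two_point_le {μ ν : Measure X} [IsFiniteMeasure μ]
    [IsFiniteMeasure ν] {f g : X → ℝ} (hfμ : Integrable f μ) (hfν : Integrable f ν)
    (hgμ : Integrable g μ) (hgν : Integrable g ν) {S : ℝ}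
    (h : ∀ x y, g y * f x - g x * f y ≤ S * (g x + g y)) :
    (∫ y, g y ∂ν) * (∫ x, f x ∂μ) - (∫ x, g x ∂μ) * (∫ y, f y ∂ν)
      ≤ S * ((∫ x, g x ∂μ) * ν.real univ + μ.real univ * ∫ y, g y ∂ν) := by
  have integrated_in_x (y : X) :
      g y * ∫ x, f x ∂μ - f y * ∫ x, g x ∂μ ≤ S * (∫ x, g x ∂μ) + S * g y * μ.real univ := by
    have := mul_integral_add_mul_integral_le (α := g y) (β := -f y - S) (c := S * g y) hfμ hgμ
      fun x => by linarith [h x y]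
    linarith
  have := mul_integral_add_mul_integral_le (α := ∫ x, f x ∂μ - S * μ.real univ)
    (β := -∫ x, g x ∂μ) (c := S * ∫ x, g x ∂μ) hgν hfν fun y => by linarith [integrated_in_x y]
  linarith

end TwoPoint

/-- Over all unit total-variation signed measures `ω` satisfying
the neutrality constraint `∫ g dω = 0`, the profit `∫ f dω` is dominated by the
best two-point spread. -/
theorem signed_integral_le_two_point_sup
    {X : Type*} [MeasurableSpace X]
    (f g : X → ℝ) (hf_meas : Measurable f) (hg_meas : Measurable g)
    (hf_bdd : ∃ C : ℝ, ∀ x, |f x| ≤ C) (hg_bdd : ∃ C : ℝ, ∀ x, |g x| ≤ C)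
    (δ : ℝ) (hδ : 0 < δ) (hgδ : ∀ x, δ ≤ g x) :
    ∀ ω : SignedMeasure X, ω.totalVariation univ = 1 →
      signedIntegral g ω = 0 →
      signedIntegral f ω ≤
        ⨆ p : X × X, (g p.2 * f p.1 - g p.1 * f p.2) / (g p.1 + g p.2) := by
  intro ω hTV hneut
  obtain ⟨Cf, hCf⟩ := hf_bdd
  obtain ⟨Cg, hCg⟩ := hg_bdd
  set μ := ω.toJordanDecomposition.posPart
  set ν := ω.toJordanDecomposition.negPart
  have hmass : μ.real univ + ν.real univ = 1 := by
    rw [← SignedMeasure.measureReal_totalVariation, measureReal_def, hTV, ENNReal.toReal_one]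
  have hf_int (m : Measure X) [IsFiniteMeasure m] : Integrable f m :=
    .of_bound hf_meas.aestronglyMeasurable Cf (.of_forall hCf)
  have hg_int (m : Measure X) [IsFiniteMeasure m] : Integrable g m :=
    .of_bound hg_meas.aestronglyMeasurable Cg (.of_forall hCg)
  set G := ∫ x, g x ∂μ
  set S := ⨆ p : X × X, (g p.2 * f p.1 - g p.1 * f p.2) / (g p.1 + g p.2)
  have hGν : ∫ y, g y ∂ν = G := (sub_eq_zero.1 hneut).symm
  have hG_ge (m : Measure X) [IsFiniteMeasure m] : δ * m.real univ ≤ ∫ x, g x ∂m := by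
    simpa [mul_comm] using integral_mono (integrable_const δ) (hg_int m) hgδ
  have hG_pos : 0 < G := by nlinarith [hG_ge μ, hG_ge ν]
  have key := integral_mul_integral_sub_le_of_two_point_le (hf_int μ) (hf_int ν) (hg_int μ)
    (hg_int ν) (two_point_spread_le_iSup hCf fun x => hδ.trans_le (hgδ x))
  rw [hGν, ← mul_sub] at key
  refine le_of_mul_le_mul_left ?_ hG_pos
  calc G * signedIntegral f ω ≤ S * (G * ν.real univ + μ.real univ * G) := key
    _ = G * S := by linear_combination (S * G) * hmass
end

section
/- Let (X,𝒜) be a measurable space with measurable singletons, f, g : X → ℝ measurable functions with g > 0 pointwise, and let x₁ ≠ x₂ be two points of X. Define weights w₁ = g(x₂)/(g(x₁)+g(x₂)) and w₂ = g(x₁)/(g(x₁)+g(x₂)) and the signed measure ω = w₁ δ_{x₁} − w₂ δ_{x₂}. Then ‖ω‖_TV = 1, ∫ g dω = 0, and ∫ f dω = (g(x₂)f(x₁) − g(x₁)f(x₂))/(g(x₁)+g(x₂)). In particular, if (x₁,x₂) maximizes (g(x₂)f(x₁) − g(x₁)f(x₂))/(g(x₁)+g(x₂)), then ω attains the supremum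 of ∫ f dω over all finite signed measures with ‖ω‖_TV = 1 and ∫ g dω = 0. -/
/-!
The first three claims hold because, for `x₁ ≠ x₂`, the Jordan decomposition of
`w₁ δ_{x₁} - w₂ δ_{x₂}` is `(w₁ δ_{x₁}, w₂ δ_{x₂})`, with `w₁ + w₂ = 1`.

Optimality is weak duality. If `M` bounds every two-point value, then
`(f y - M) / g y ≤ (f z + M) / g z` for all `y, z`, so a single `t` separates the two families,
i.e. `|f - t g| ≤ M` pointwise. For `μ` with `∫ g dμ = 0` this gives
`∫ f dμ = ∫ (f - t g) dμ ≤ M ‖μ‖_TV`.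
-/

open MeasureTheory Set

open scoped NNReal

section Duality

variable {X : Type*} [MeasurableSpace X] {f g : X → ℝ} {t M : ℝ}

theorem abs_integral_sub_mul_integral_le (ν : Measure X) [IsFiniteMeasure ν]
    (hf : Measurable f) (hg : Measurable g) (hM : 0 ≤ M) (hfg : ∀ y, |f y - t * g y| ≤ M) :
    |∫ y, f y ∂ν - t * ∫ y, g y ∂ν| ≤ M * ν.real univ := by
  have hbound {h : X → ℝ} (hh : ∀ y, |h y| ≤ M) : |∫ y, h y ∂ν| ≤ M * ν.real univ :=
    norm_integral_le_of_norm_le_const (μ := ν) (f := h) (.of_forall hh)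
  have hdiff : Integrable (fun y => f y - t * g y) ν :=
    .of_bound (hf.sub (hg.const_mul t)).aestronglyMeasurable M (.of_forall hfg)
  by_cases hg_int : Integrable g ν
  · have hf_int : Integrable f ν :=
      (hdiff.add (hg_int.const_mul t)).congr (.of_forall fun y => by simp)
    rw [← integral_const_mul, ← integral_sub hf_int (hg_int.const_mul t)]
    exact hbound hfg
  by_cases ht : t = 0
  · subst ht
    simpa using hbound (by simpa using hfg)
  -- `f = (f - t g) + t g` is integrable iff `g` is, so both integrals are junk zeros.
  have hf_int : ¬ Integrable f ν := fun hf_int => hg_int <| by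
    simpa [ht] using ((hf_int.sub hdiff).const_mul t⁻¹)
  rw [integral_undef hf_int, integral_undef hg_int]
  simpa using mul_nonneg hM measureReal_nonneg

theorem abs_signedIntegral_sub_mul_le (μ : SignedMeasure X)
    (hf : Measurable f) (hg : Measurable g) (hM : 0 ≤ M) (hfg : ∀ y, |f y - t * g y| ≤ M) :
    |signedIntegral f μ - t * signedIntegral g μ| ≤ M * (μ.totalVariation univ).toReal := by
  set J := μ.toJordanDecomposition
  have hpos := abs_integral_sub_mul_integral_le J.posPart hf hg hM hfg
  have hneg := abs_integral_sub_mul_integral_le J.negPart hf hg hM hfg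
  have hTV : (μ.totalVariation univ).toReal = J.posPart.real univ + J.negPart.real univ := by
    rw [SignedMeasure.totalVariation, Measure.add_apply,
      ENNReal.toReal_add (measure_ne_top _ _) (measure_ne_top _ _)]
    rfl
  rw [hTV, mul_add]
  calc |signedIntegral f μ - t * signedIntegral g μ|
      = |(∫ y, f y ∂J.posPart - t * ∫ y, g y ∂J.posPart)
          - (∫ y, f y ∂J.negPart - t * ∫ y, g y ∂J.negPart)| := by
        rw [signedIntegral, signedIntegral]; congr 1; ring
    _ ≤ _ := (abs_sub _ _).trans (add_le_add hpos hneg)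

end Duality

theorem exists_forall_le_le_of_forall_le {ι : Type*} [Nonempty ι] {a b : ι → ℝ}
    (hab : ∀ i j, a i ≤ b j) : ∃ t, ∀ i, a i ≤ t ∧ t ≤ b i := by
  have hbdd : BddAbove (range a) := ⟨b (Classical.arbitrary ι), by
    rintro _ ⟨i, rfl⟩; exact hab i _⟩
  exact ⟨⨆ i, a i, fun i => ⟨le_ciSup hbdd i, ciSup_le fun j => hab j i⟩⟩

section TwoPoint

variable {X : Type*} {f g : X → ℝ}

/-- The payoff `∫ f dω` of the `g`-neutral spread of unit total variation that is long at `y₁` and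
short at `y₂`. -/
noncomputable def twoPointValue (f g : X → ℝ) (y₁ y₂ : X) : ℝ :=
  (g y₂ * f y₁ - g y₁ * f y₂) / (g y₁ + g y₂)

@[simp]
theorem twoPointValue_self (f g : X → ℝ) (y : X) : twoPointValue f g y y = 0 := by
  simp [twoPointValue]

theorem exists_abs_sub_mul_le_of_twoPointValue_le [Nonempty X] {M : ℝ} (hg : ∀ y, 0 < g y)
    (hM : ∀ y₁ y₂, twoPointValue f g y₁ y₂ ≤ M) : ∃ t, ∀ y, |f y - t * g y| ≤ M := by
  have hratio (y z : X) : (f y - M) / g y ≤ (f z + M) / g z := by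
    have h := hM y z
    rw [twoPointValue, div_le_iff₀ (add_pos (hg y) (hg z))] at h
    rw [div_le_div_iff₀ (hg y) (hg z)]
    linarith
  obtain ⟨t, ht⟩ := exists_forall_le_le_of_forall_le hratio
  refine ⟨t, fun y => abs_le.2 ⟨?_, ?_⟩⟩
  · have := (le_div_iff₀ (hg y)).1 (ht y).2
    linarith
  · have := (div_le_iff₀ (hg y)).1 (ht y).1
    linarith

end TwoPoint

theorem signedIntegral_le_of_twoPointValue_le {X : Type*} [MeasurableSpace X] [Nonempty X]
    {f g : X → ℝ} {M : ℝ} (hf : Measurable f) (hg : Measurable g) (hg_pos : ∀ y, 0 < g y)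
    (hM : ∀ y₁ y₂, twoPointValue f g y₁ y₂ ≤ M) (μ : SignedMeasure X)
    (hμg : signedIntegral g μ = 0) :
    signedIntegral f μ ≤ M * (μ.totalVariation univ).toReal := by
  have hM_nonneg : 0 ≤ M := by
    simpa using hM (Classical.arbitrary X) (Classical.arbitrary X)
  obtain ⟨t, ht⟩ := exists_abs_sub_mul_le_of_twoPointValue_le hg_pos hM
  have := abs_signedIntegral_sub_mul_le μ hf hg hM_nonneg ht
  rw [hμg, mul_zero, sub_zero] at this
  exact le_of_abs_le this

section DiracSpread

variable {X : Type*} [MeasurableSpace X] [MeasurableSingletonClass X] {x y : X}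

theorem mutuallySingular_smul_dirac (a b : ℝ≥0) (hxy : x ≠ y) :
    a • Measure.dirac x ⟂ₘ b • Measure.dirac y :=
  ⟨{y}, measurableSet_singleton y, by simp [hxy], by simp⟩

theorem toJordanDecomposition_smul_dirac_sub_smul_dirac (a b : ℝ≥0) (hxy : x ≠ y) :
    ((a : ℝ) • (Measure.dirac x).toSignedMeasure
        - (b : ℝ) • (Measure.dirac y).toSignedMeasure).toJordanDecomposition =
      ⟨a • Measure.dirac x, b • Measure.dirac y, mutuallySingular_smul_dirac a b hxy⟩ := by
  refine SignedMeasure.toJordanDecomposition_eq ?_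
  simp only [JordanDecomposition.toSignedMeasure, Measure.toSignedMeasure_smul]
  rfl

theorem totalVariation_smul_dirac_sub_smul_dirac (a b : ℝ≥0) (hxy : x ≠ y) :
    ((a : ℝ) • (Measure.dirac x).toSignedMeasure
        - (b : ℝ) • (Measure.dirac y).toSignedMeasure).totalVariation univ = ↑(a + b) := by
  rw [SignedMeasure.totalVariation, toJordanDecomposition_smul_dirac_sub_smul_dirac a b hxy]
  simp

theorem signedIntegral_smul_dirac_sub_smul_dirac (a b : ℝ≥0) (hxy : x ≠ y) (h : X → ℝ) :
    signedIntegral h ((a : ℝ) • (Measure.dirac x).toSignedMeasure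
        - (b : ℝ) • (Measure.dirac y).toSignedMeasure) = a * h x - b * h y := by
  rw [signedIntegral, toJordanDecomposition_smul_dirac_sub_smul_dirac a b hxy]
  simp [integral_smul_nnreal_measure, NNReal.smul_def]

end DiracSpread

/-- The vega-weighted two-point spread `ω = w₁ δ_{x₁} - w₂ δ_{x₂}`
has unit total variation, is `g`-neutral, realizes the two-point expression,
and is optimal whenever `(x₁,x₂)` maximizes the two-point expression. -/
theorem two_point_spread_properties_and_optimality
    {X : Type*} [MeasurableSpace X] [MeasurableSingletonClass X]
    (f g : X → ℝ) (hf_meas : Measurable f) (hg_meas : Measurable g)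
    (hg_pos : ∀ x, 0 < g x)
    (x₁ x₂ : X) (hx : x₁ ≠ x₂)
    (w₁ w₂ : ℝ)
    (hw₁ : w₁ = g x₂ / (g x₁ + g x₂)) (hw₂ : w₂ = g x₁ / (g x₁ + g x₂))
    (ω : SignedMeasure X)
    (hωdef : ω = w₁ • (Measure.dirac x₁).toSignedMeasure
               - w₂ • (Measure.dirac x₂).toSignedMeasure) :
    ω.totalVariation univ = 1 ∧
    signedIntegral g ω = 0 ∧
    signedIntegral f ω = (g x₂ * f x₁ - g x₁ * f x₂) / (g x₁ + g x₂) ∧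
    ((∀ y₁ y₂ : X, (g y₂ * f y₁ - g y₁ * f y₂) / (g y₁ + g y₂) ≤
        (g x₂ * f x₁ - g x₁ * f x₂) / (g x₁ + g x₂)) →
      ∀ μ : SignedMeasure X, μ.totalVariation univ = 1 →
        signedIntegral g μ = 0 → signedIntegral f μ ≤ signedIntegral f ω) := by
  have hsum_pos : 0 < g x₁ + g x₂ := add_pos (hg_pos x₁) (hg_pos x₂)
  lift w₁ to ℝ≥0 using hw₁ ▸ (div_pos (hg_pos x₂) hsum_pos).le
  lift w₂ to ℝ≥0 using hw₂ ▸ (div_pos (hg_pos x₁) hsum_pos).le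
  have hint (h : X → ℝ) : signedIntegral h ω = w₁ * h x₁ - w₂ * h x₂ :=
    hωdef ▸ signedIntegral_smul_dirac_sub_smul_dirac w₁ w₂ hx h
  have hweights : w₁ + w₂ = 1 := by
    ext; push_cast; rw [hw₁, hw₂]; field_simp; ring
  have hfω : signedIntegral f ω = twoPointValue f g x₁ x₂ := by
    rw [hint, hw₁, hw₂, twoPointValue]
    field_simp
  refine ⟨?_, ?_, hfω, ?_⟩
  · rw [hωdef, totalVariation_smul_dirac_sub_smul_dirac w₁ w₂ hx, hweights, ENNReal.coe_one]
  · rw [hint, hw₁, hw₂]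
    field_simp
    ring
  · intro hmax μ hμ hμg
    have : Nonempty X := ⟨x₁⟩
    rw [hfω]
    simpa [hμ] using signedIntegral_le_of_twoPointValue_le (M := twoPointValue f g x₁ x₂)
      hf_meas hg_meas hg_pos hmax μ hμg
end

section
/- Let (X,𝒜) be a measurable space, f, g, β⁺, β⁻ : X → ℝ bounded measurable functions with g(x) ≥ δ, β⁺(x) ≥ δ and β⁻(x) ≥ δ for all x, for some δ > 0. Then for every finite signed measure ω on X with Jordan decomposition ω = ω⁺ − ω⁻ satisfying ∫ β⁺ dω⁺ + ∫ β⁻ dω⁻ = 1 and ∫ g dω = 0, one has ∫ f dω ≤ sup_{x₁,x₂ ∈ X} (g(x₂)f(x₁) − g(x₁)f(x₂))/(β⁻(x₂)g(x₁) + β⁺(x₁)g(x₂)). -/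
/-!
For each pair `(x₁, x₂)` the supremum `S` bounds the two-point spread:
`g x₂ * f x₁ - g x₁ * f x₂ ≤ S * (βn x₂ * g x₁ + βp x₁ * g x₂)`.
Integrating `x₁` against `ω⁺` and `x₂` against `ω⁻` gives
`G * (∫ f dω⁺ - ∫ f dω⁻) ≤ S * G * (∫ βp dω⁺ + ∫ βn dω⁻) = S * G`,
where `G = ∫ g dω⁺ = ∫ g dω⁻` by neutrality. Since `g > 0`, `G = 0` would force
`ω⁺ = ω⁻ = 0`, contradicting the margin normalization; so `G > 0` and we divide by it.
-/

open MeasureTheory Set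

theorem Measurable.integrable_of_abs_le {X : Type*} [MeasurableSpace X] {μ : Measure X}
    [IsFiniteMeasure μ] {h : X → ℝ} (hm : Measurable h) {C : ℝ} (hC : ∀ x, |h x| ≤ C) :
    Integrable h μ :=
  .of_bound hm.aestronglyMeasurable C (ae_of_all _ hC)

theorem measure_eq_zero_of_integral_eq_zero_of_pos {X : Type*} [MeasurableSpace X]
    {μ : Measure X} {g : X → ℝ} (hg : Integrable g μ) (hpos : ∀ x, 0 < g x)
    (h : ∫ x, g x ∂μ = 0) : μ = 0 := by
  have hzero : g =ᵐ[μ] 0 := (integral_eq_zero_iff_of_nonneg (fun x => (hpos x).le) hg).mp h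
  rw [← ae_eq_bot, ← Filter.eventually_false_iff_eq_bot]
  filter_upwards [hzero] with x hx
  exact (hpos x).ne' hx

theorem le_ciSup_div_mul {ι : Type*} {a b : ι → ℝ} {c : ℝ} (hc : 0 < c) (hb : ∀ i, c ≤ b i)
    (ha : BddAbove (range a)) (i : ι) : a i ≤ (⨆ j, a j / b j) * b i := by
  obtain ⟨M, hM⟩ := ha
  have hbdd : BddAbove (range fun j => a j / b j) := by
    refine ⟨max M 0 / c, ?_⟩
    rintro _ ⟨j, rfl⟩
    have hbj : 0 < b j := hc.trans_le (hb j)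
    calc a j / b j ≤ max M 0 / b j := by
          gcongr; exact le_max_of_le_left (hM ⟨j, rfl⟩)
      _ ≤ max M 0 / c := div_le_div_of_nonneg_left (le_max_right M 0) hc (hb j)
  have hbi : 0 < b i := hc.trans_le (hb i)
  rw [← div_le_iff₀ hbi]
  exact le_ciSup hbdd i

theorem bddAbove_range_two_point_spread {X : Type*} {f g : X → ℝ}
    (hf : ∃ C, ∀ x, |f x| ≤ C) (hg : ∃ C, ∀ x, |g x| ≤ C) :
    BddAbove (range fun p : X × X => g p.2 * f p.1 - g p.1 * f p.2) := by
  obtain ⟨Cf, hCf⟩ := hf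
  obtain ⟨Cg, hCg⟩ := hg
  have hprod : ∀ x y, |g y * f x| ≤ Cg * Cf := fun x y => by
    rw [abs_mul]; exact mul_le_mul (hCg y) (hCf x) (abs_nonneg _) ((abs_nonneg _).trans (hCg y))
  refine ⟨2 * (Cg * Cf), ?_⟩
  rintro _ ⟨⟨x, y⟩, rfl⟩
  have h1 := (le_abs_self (g y * f x)).trans (hprod x y)
  have h2 := (neg_le_abs (g x * f y)).trans (hprod y x)
  dsimp only
  linarith

theorem integral_mul_sub_integral_mul_le_of_two_point_bound {X : Type*} [MeasurableSpace X]
    {μ ν : Measure X} [SFinite μ] [SFinite ν] {f g βp βn : X → ℝ} {S : ℝ}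
    (hfμ : Integrable f μ) (hfν : Integrable f ν) (hgμ : Integrable g μ)
    (hgν : Integrable g ν) (hβp : Integrable βp μ) (hβn : Integrable βn ν)
    (h : ∀ x₁ x₂, g x₂ * f x₁ - g x₁ * f x₂ ≤ S * (βn x₂ * g x₁ + βp x₁ * g x₂)) :
    (∫ x, f x ∂μ) * (∫ x, g x ∂ν) - (∫ x, g x ∂μ) * (∫ x, f x ∂ν) ≤
      S * ((∫ x, g x ∂μ) * (∫ x, βn x ∂ν) + (∫ x, βp x ∂μ) * (∫ x, g x ∂ν)) := by
  have hmono : ∫ z, (f z.1 * g z.2 - g z.1 * f z.2) ∂μ.prod ν ≤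
      ∫ z, S * (g z.1 * βn z.2 + βp z.1 * g z.2) ∂μ.prod ν :=
    integral_mono ((hfμ.mul_prod hgν).sub (hgμ.mul_prod hfν))
      (((hgμ.mul_prod hβn).add (hβp.mul_prod hgν)).const_mul S)
      (fun z => by linarith [h z.1 z.2])
  rwa [integral_sub (hfμ.mul_prod hgν) (hgμ.mul_prod hfν), integral_const_mul,
    integral_add (hgμ.mul_prod hβn) (hβp.mul_prod hgν), integral_prod_mul, integral_prod_mul,
    integral_prod_mul, integral_prod_mul] at hmono

/-- Optimality bound for trading under a margin constraint:
over all signed measures whose Jordan parts satisfy the margin normalization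
`∫ β⁺ dω⁺ + ∫ β⁻ dω⁻ = 1` and the neutrality constraint `∫ g dω = 0`, the
profit `∫ f dω` is dominated by the best margin-weighted two-point spread. -/
theorem signed_integral_le_two_point_sup_margin
    {X : Type*} [MeasurableSpace X]
    (f g βp βn : X → ℝ)
    (hf_meas : Measurable f) (hg_meas : Measurable g)
    (hβp_meas : Measurable βp) (hβn_meas : Measurable βn)
    (hf_bdd : ∃ C : ℝ, ∀ x, |f x| ≤ C) (hg_bdd : ∃ C : ℝ, ∀ x, |g x| ≤ C)
    (hβp_bdd : ∃ C : ℝ, ∀ x, |βp x| ≤ C) (hβn_bdd : ∃ C : ℝ, ∀ x, |βn x| ≤ C)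
    (δ : ℝ) (hδ : 0 < δ)
    (hgδ : ∀ x, δ ≤ g x) (hβpδ : ∀ x, δ ≤ βp x) (hβnδ : ∀ x, δ ≤ βn x) :
    ∀ ω : SignedMeasure X,
      (∫ x, βp x ∂ω.toJordanDecomposition.posPart)
        + (∫ x, βn x ∂ω.toJordanDecomposition.negPart) = 1 →
      signedIntegral g ω = 0 →
      signedIntegral f ω ≤
        ⨆ p : X × X, (g p.2 * f p.1 - g p.1 * f p.2) /
          (βn p.2 * g p.1 + βp p.1 * g p.2) := by
  intro ω hmargin hneutral
  set μ := ω.toJordanDecomposition.posPart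
  set ν := ω.toJordanDecomposition.negPart
  obtain ⟨Cf, hCf⟩ := hf_bdd
  obtain ⟨Cg, hCg⟩ := hg_bdd
  obtain ⟨Cp, hCp⟩ := hβp_bdd
  obtain ⟨Cn, hCn⟩ := hβn_bdd
  have hgμ : Integrable g μ := hg_meas.integrable_of_abs_le hCg
  have hgν : Integrable g ν := hg_meas.integrable_of_abs_le hCg
  have hg_pos : ∀ x, 0 < g x := fun x => hδ.trans_le (hgδ x)
  -- denominators bounded away from `0` make the `⨆` a genuine supremum, not the junk value `0`
  have hden : ∀ p : X × X, 2 * δ ^ 2 ≤ βn p.2 * g p.1 + βp p.1 * g p.2 := fun p => by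
    nlinarith [hgδ p.1, hgδ p.2, hβpδ p.1, hβnδ p.2]
  have hspread := le_ciSup_div_mul (by positivity) hden
    (bddAbove_range_two_point_spread ⟨Cf, hCf⟩ ⟨Cg, hCg⟩)
  have hbilinear := integral_mul_sub_integral_mul_le_of_two_point_bound
    (hf_meas.integrable_of_abs_le hCf) (hf_meas.integrable_of_abs_le hCf) hgμ hgν
    (hβp_meas.integrable_of_abs_le hCp) (hβn_meas.integrable_of_abs_le hCn)
    (fun x₁ x₂ => hspread (x₁, x₂))
  have hG : ∫ x, g x ∂μ = ∫ x, g x ∂ν := sub_eq_zero.mp hneutral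
  have hG_pos : 0 < ∫ x, g x ∂μ := by
    refine (integral_nonneg fun x => (hg_pos x).le).lt_of_ne' fun h0 => ?_
    have hμ := measure_eq_zero_of_integral_eq_zero_of_pos hgμ hg_pos h0
    have hν := measure_eq_zero_of_integral_eq_zero_of_pos hgν hg_pos (hG ▸ h0)
    simp [hμ, hν] at hmargin
  rw [← hG] at hbilinear
  show ∫ x, f x ∂μ - ∫ x, f x ∂ν ≤ _
  refine le_of_mul_le_mul_left ?_ hG_pos
  linear_combination hbilinear + (⨆ p : X × X, (g p.2 * f p.1 - g p.1 * f p.2) /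
    (βn p.2 * g p.1 + βp p.1 * g p.2)) * (∫ x, g x ∂μ) * hmargin
end
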